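/- arXiv:1901.00485 — 2 statements merged into one kernel-verified Lean document; each statement's English description precedes it below -/
import Mathlib

section
/- Suppose A = UCH and B = VSH where U, V are orthogonal, C and S are diagonal r×r matrices with nonnegative entries satisfying C² + S² = I_r, H is r×n with full row rank, and every diagonal entry of S is nonzero. Then A B† = U (C S⁻¹) Vᵀ, where B† denotes the Moore–Penrose pseudoinverse of B; in particular, the singular values of AB† are the ratios cᵢ/sᵢ. -/
open Matrix

/-- A square real matrix of full rank is a unit. -/
lemma isUnit_of_rank_eq_card {r : ℕ} (M : Matrix (Fin r) (Fin r) ℝ)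
    (h : M.rank = r) : IsUnit M := by
  have hsurj : Function.Surjective M.mulVecLin := by
    rw [← LinearMap.range_eq_top]
    apply Submodule.eq_top_of_finrank_eq
    rw [← Matrix.rank, h]
    simp [Module.finrank_pi]
  choose f hf using hsurj
  set N : Matrix (Fin r) (Fin r) ℝ := Matrix.of fun i j => f (Pi.single j 1) i with hN
  have hMN : M * N = 1 := by
    ext i j
    have h1 : M.mulVecLin (f (Pi.single j 1)) i = (Pi.single j (1:ℝ) : Fin r → ℝ) i := by
      rw [hf]
    have h2 : (M * N) i j = M.mulVecLin (f (Pi.single j 1)) i := by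
      simp [Matrix.mul_apply, Matrix.mulVecLin_apply, Matrix.mulVec, dotProduct, hN]
    rw [h2, h1, Matrix.one_apply, Pi.single_apply]
  have hdet := congrArg Matrix.det hMN
  rw [Matrix.det_mul, Matrix.det_one] at hdet
  exact (Matrix.isUnit_iff_isUnit_det M).mpr (IsUnit.of_mul_eq_one _ hdet)

/-- The four Penrose conditions characterizing the Moore–Penrose pseudoinverse. -/
def IsMoorePenrose {m n : ℕ} (B : Matrix (Fin m) (Fin n) ℝ)
    (Bp : Matrix (Fin n) (Fin m) ℝ) : Prop :=
  B * Bp * B = B ∧ Bp * B * Bp = Bp ∧ (B * Bp)ᵀ = B * Bp ∧ (Bp * B)ᵀ = Bp * B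

theorem stmt2 (r n : ℕ)
    (A B : Matrix (Fin r) (Fin n) ℝ)
    (U V : Matrix (Fin r) (Fin r) ℝ)
    (c s : Fin r → ℝ)
    (H : Matrix (Fin r) (Fin n) ℝ)
    (hU : Uᵀ * U = 1) (hUU : U * Uᵀ = 1)
    (hV : Vᵀ * V = 1) (hVV : V * Vᵀ = 1)
    (hc : ∀ i, 0 ≤ c i) (hs : ∀ i, 0 ≤ s i) (hsne : ∀ i, s i ≠ 0)
    (hcs : ∀ i, c i ^ 2 + s i ^ 2 = 1)
    (hH : H.rank = r)
    (hA : A = U * Matrix.diagonal c * H)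
    (hB : B = V * Matrix.diagonal s * H)
    (Bp : Matrix (Fin n) (Fin r) ℝ) (hBp : IsMoorePenrose B Bp) :
    A * Bp = U * Matrix.diagonal (fun i => c i / s i) * Vᵀ := by
  -- det of V * diagonal s is a unit
  have hdetV : IsUnit V.det := by
    have := congrArg Matrix.det hVV
    rw [Matrix.det_mul, Matrix.det_one] at this
    exact IsUnit.of_mul_eq_one _ this
  have hdetVS : IsUnit (V * Matrix.diagonal s).det := by
    rw [Matrix.det_mul, Matrix.det_diagonal]
    exact hdetV.mul (isUnit_iff_ne_zero.mpr (Finset.prod_ne_zero_iff.mpr fun i _ => hsne i))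
  -- B has full row rank
  have hrB : B.rank = r := by
    rw [hB, Matrix.rank_mul_eq_right_of_isUnit_det _ _ hdetVS]
    exact hH
  have hrBB : (B * Bᵀ).rank = r := by rw [Matrix.rank_self_mul_transpose]; exact hrB
  have hunit := isUnit_of_rank_eq_card _ hrBB
  have hinv : (B * Bᵀ) * (B * Bᵀ)⁻¹ = 1 :=
    Matrix.mul_nonsing_inv _ ((Matrix.isUnit_iff_isUnit_det _).mp hunit)
  have hBBp : B * Bp = 1 := by
    calc B * Bp = B * Bp * ((B * Bᵀ) * (B * Bᵀ)⁻¹) := by rw [hinv, Matrix.mul_one]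
    _ = (B * Bp * B) * (Bᵀ * (B * Bᵀ)⁻¹) := by simp only [Matrix.mul_assoc]
    _ = B * (Bᵀ * (B * Bᵀ)⁻¹) := by rw [hBp.1]
    _ = (B * Bᵀ) * (B * Bᵀ)⁻¹ := by rw [Matrix.mul_assoc]
    _ = 1 := hinv
  -- express H via B
  have hss : Matrix.diagonal (fun i => (s i)⁻¹) * Matrix.diagonal s = 1 := by
    rw [Matrix.diagonal_mul_diagonal]
    convert Matrix.diagonal_one using 2
    exact funext fun i => inv_mul_cancel₀ (hsne i)
  have hHe : H = Matrix.diagonal (fun i => (s i)⁻¹) * Vᵀ * B := by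
    rw [hB]
    calc H = (Matrix.diagonal (fun i => (s i)⁻¹) * Matrix.diagonal s) * H := by
            rw [hss, Matrix.one_mul]
    _ = Matrix.diagonal (fun i => (s i)⁻¹) * ((Vᵀ * V) * (Matrix.diagonal s * H)) := by
            rw [hV, Matrix.one_mul, Matrix.mul_assoc]
    _ = Matrix.diagonal (fun i => (s i)⁻¹) * Vᵀ * (V * Matrix.diagonal s * H) := by
            simp only [Matrix.mul_assoc]
  -- finish
  have hdiag : Matrix.diagonal c * Matrix.diagonal (fun i => (s i)⁻¹)
      = Matrix.diagonal (fun i => c i / s i) := by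
    rw [Matrix.diagonal_mul_diagonal]
    exact congrArg _ (funext fun i => (div_eq_mul_inv (c i) (s i)).symm)
  calc A * Bp = U * Matrix.diagonal c * (Matrix.diagonal (fun i => (s i)⁻¹) * Vᵀ * B) * Bp := by
        rw [hA, ← hHe]
  _ = U * (Matrix.diagonal c * Matrix.diagonal (fun i => (s i)⁻¹)) * Vᵀ * (B * Bp) := by
        simp only [Matrix.mul_assoc]
  _ = U * Matrix.diagonal (fun i => c i / s i) * Vᵀ := by
        rw [hdiag, hBBp, Matrix.mul_one]
end

section
/- Let Ax = b be a full-column-rank least squares problem with solution x₀ = (AᵀA)⁻¹Aᵀb, and let x_λ = (AᵀA + λ²LᵀL)⁻¹Aᵀb be the Tikhonov-regularized solution. Suppose A = U H₀ where U has orthonormal columns, and for each λ ≥ 0 there is an invertible H_λ with H₀ = C_λ H_λ, where [A; λL] = [U C_λ; V S_λ] H_λ is a GSVD in compact format (C_λ, S_λ diagonal n×n, C_λ² + S_λ² = I, UᵀU = I, VᵀV = I). Then x_λ = H₀⁻¹ C_λ² H₀ x₀. -/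
/-!
Both normal-equation matrices factor through the GSVD: `AᵀA = H₀ᵀH₀` because `U` has orthonormal
columns, and `AᵀA + λ²LᵀL = H_λᵀH_λ` because the stacked factor `[U C_λ; V S_λ]` does too
(`C_λ² + S_λ² = I`). Hence `(AᵀA)⁻¹Aᵀ = H₀⁻¹Uᵀ` and `(AᵀA + λ²LᵀL)⁻¹Aᵀ = H_λ⁻¹C_λUᵀ`, and
`H₀ = C_λH_λ` turns the second into `H₀⁻¹C_λ²Uᵀ = H₀⁻¹C_λ²H₀ · H₀⁻¹Uᵀ`. Full column rank of `A`
makes `H₀`, hence `C_λ` and `H_λ`, invertible.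
-/

open Matrix

namespace Matrix

variable {m m₁ m₂ n p R K : Type*}

theorem isUnit_of_rank_eq_card [Fintype n] [DecidableEq n] [Field K] {A : Matrix n n K}
    (h : A.rank = Fintype.card n) : IsUnit A := by
  rw [← mulVec_surjective_iff_isUnit, ← coe_mulVecLin, ← LinearMap.range_eq_top]
  exact Submodule.eq_top_of_finrank_eq (by simpa [rank] using h)

theorem isUnit_of_rank_mul_eq_card [Fintype m] [Fintype n] [DecidableEq n] [Field K]
    {U : Matrix m n K} {H : Matrix n n K} (h : (U * H).rank = Fintype.card n) : IsUnit H :=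
  isUnit_of_rank_eq_card <| le_antisymm (rank_le_card_width H) (h ▸ rank_mul_le_right U H)

theorem transpose_mul_self_of_orthonormal_mul [Fintype m] [Fintype n] [DecidableEq n]
    [CommRing R] {U : Matrix m n R} (hU : Uᵀ * U = 1) (H : Matrix n p R) :
    (U * H)ᵀ * (U * H) = Hᵀ * H := by
  rw [transpose_mul, Matrix.mul_assoc, ← Matrix.mul_assoc Uᵀ, hU, Matrix.one_mul]

theorem transpose_mul_self_inv_mul [Fintype n] [DecidableEq n] [CommRing R]
    {H : Matrix n n R} (hH : IsUnit H) (W : Matrix n m R) :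
    (Hᵀ * H)⁻¹ * (Hᵀ * W) = H⁻¹ * W := by
  have hHt : IsUnit Hᵀ.det := by rwa [det_transpose, ← isUnit_iff_isUnit_det]
  rw [mul_inv_rev, Matrix.mul_assoc, nonsing_inv_mul_cancel_left _ W hHt]

theorem fromRows_transpose_mul_self [Fintype m₁] [Fintype m₂] [CommRing R]
    (A : Matrix m₁ n R) (B : Matrix m₂ n R) :
    (fromRows A B)ᵀ * fromRows A B = Aᵀ * A + Bᵀ * B := by
  rw [transpose_fromRows, fromCols_mul_fromRows]

theorem transpose_mul_self_add_smul_sq [Fintype m₁] [Fintype m₂] [CommRing R]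
    (A : Matrix m₁ n R) (L : Matrix m₂ n R) (lam : R) :
    Aᵀ * A + lam ^ 2 • (Lᵀ * L) = (fromRows A (lam • L))ᵀ * fromRows A (lam • L) := by
  rw [fromRows_transpose_mul_self, transpose_smul, Matrix.smul_mul, Matrix.mul_smul, smul_smul,
    sq]

theorem fromRows_mul_diagonal_orthonormal [Fintype m₁] [Fintype m₂] [Fintype n]
    [DecidableEq n] [CommRing R] {U : Matrix m₁ n R} {V : Matrix m₂ n R}
    (hU : Uᵀ * U = 1) (hV : Vᵀ * V = 1) {c s : n → R} (hcs : ∀ i, c i ^ 2 + s i ^ 2 = 1) :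
    (fromRows (U * diagonal c) (V * diagonal s))ᵀ * fromRows (U * diagonal c) (V * diagonal s)
      = 1 := by
  rw [fromRows_transpose_mul_self, transpose_mul_self_of_orthonormal_mul hU,
    transpose_mul_self_of_orthonormal_mul hV, diagonal_transpose, diagonal_transpose,
    diagonal_mul_diagonal, diagonal_mul_diagonal, diagonal_add, ← diagonal_one]
  exact congrArg diagonal (funext fun i => by simpa [sq] using hcs i)

theorem mul_inv_mul_sq [Fintype n] [DecidableEq n] [CommRing R] {D : Matrix n n R}
    (hD : IsUnit D) (H : Matrix n n R) : (D * H)⁻¹ * D ^ 2 = H⁻¹ * D := by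
  rw [mul_inv_rev, sq, Matrix.mul_assoc, ← Matrix.mul_assoc D⁻¹,
    nonsing_inv_mul _ ((isUnit_iff_isUnit_det D).mp hD), Matrix.one_mul]

end Matrix

theorem stmt11_general (m₁ m₂ n : ℕ)
    (A : Matrix (Fin m₁) (Fin n) ℝ) (L : Matrix (Fin m₂) (Fin n) ℝ)
    (b : Fin m₁ → ℝ) (lam : ℝ)
    (hArank : A.rank = n)
    (U : Matrix (Fin m₁) (Fin n) ℝ) (V : Matrix (Fin m₂) (Fin n) ℝ)
    (c s : Fin n → ℝ)
    (H₀ Hlam : Matrix (Fin n) (Fin n) ℝ)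
    (hU : Uᵀ * U = 1) (hV : Vᵀ * V = 1)
    (hcs : ∀ i, c i ^ 2 + s i ^ 2 = 1)
    (hAU : A = U * H₀)
    (hH₀ : H₀ = Matrix.diagonal c * Hlam)
    (hgsvd : Matrix.fromRows A (lam • L) =
      Matrix.fromRows (U * Matrix.diagonal c) (V * Matrix.diagonal s) * Hlam)
    (x₀ xlam : Fin n → ℝ)
    (hx₀ : x₀ = ((Aᵀ * A)⁻¹ * Aᵀ).mulVec b)
    (hxlam : xlam = ((Aᵀ * A + lam ^ 2 • (Lᵀ * L))⁻¹ * Aᵀ).mulVec b) :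
    xlam = (H₀⁻¹ * (Matrix.diagonal c) ^ 2 * H₀).mulVec x₀ := by
  set d := diagonal c
  have hA : A = U * d * Hlam := by
    rw [fromRows_mul] at hgsvd
    exact (fromRows_inj hgsvd).1
  have hH₀unit : IsUnit H₀ := isUnit_of_rank_mul_eq_card (U := U) (by simpa [← hAU] using hArank)
  obtain ⟨hd, hHlam⟩ : IsUnit d ∧ IsUnit Hlam := IsUnit.mul_iff.mp (hH₀ ▸ hH₀unit)
  have hx₀_eq : (Aᵀ * A)⁻¹ * Aᵀ = H₀⁻¹ * Uᵀ := by
    rw [hAU, transpose_mul_self_of_orthonormal_mul hU, transpose_mul,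
      transpose_mul_self_inv_mul hH₀unit]
  have hxlam_eq : (Aᵀ * A + lam ^ 2 • (Lᵀ * L))⁻¹ * Aᵀ = Hlam⁻¹ * d * Uᵀ := by
    rw [transpose_mul_self_add_smul_sq, hgsvd,
      transpose_mul_self_of_orthonormal_mul (fromRows_mul_diagonal_orthonormal hU hV hcs),
      hA, transpose_mul _ Hlam, transpose_mul_self_inv_mul hHlam, transpose_mul,
      diagonal_transpose, Matrix.mul_assoc]
  rw [hxlam, hx₀, hx₀_eq, hxlam_eq, mulVec_mulVec, Matrix.mul_assoc _ H₀,
    mul_nonsing_inv_cancel_left _ Uᵀ ((isUnit_iff_isUnit_det H₀).mp hH₀unit), hH₀,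
    mul_inv_mul_sq hd]

theorem stmt11 (m₁ m₂ n : ℕ)
    (A : Matrix (Fin m₁) (Fin n) ℝ) (L : Matrix (Fin m₂) (Fin n) ℝ)
    (b : Fin m₁ → ℝ) (lam : ℝ) (hlam : 0 ≤ lam)
    (hArank : A.rank = n)
    (U : Matrix (Fin m₁) (Fin n) ℝ) (V : Matrix (Fin m₂) (Fin n) ℝ)
    (c s : Fin n → ℝ)
    (H₀ Hlam : Matrix (Fin n) (Fin n) ℝ)
    (hU : Uᵀ * U = 1) (hV : Vᵀ * V = 1)
    (hcs : ∀ i, c i ^ 2 + s i ^ 2 = 1)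
    (hAU : A = U * H₀)
    (hHlam : IsUnit Hlam)
    (hH₀ : H₀ = Matrix.diagonal c * Hlam)
    (hgsvd : Matrix.fromRows A (lam • L) =
      Matrix.fromRows (U * Matrix.diagonal c) (V * Matrix.diagonal s) * Hlam)
    (x₀ xlam : Fin n → ℝ)
    (hx₀ : x₀ = ((Aᵀ * A)⁻¹ * Aᵀ).mulVec b)
    (hxlam : xlam = ((Aᵀ * A + lam ^ 2 • (Lᵀ * L))⁻¹ * Aᵀ).mulVec b) :
    xlam = (H₀⁻¹ * (Matrix.diagonal c) ^ 2 * H₀).mulVec x₀ :=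
  stmt11_general m₁ m₂ n A L b lam hArank U V c s H₀ Hlam hU hV hcs hAU hH₀ hgsvd x₀ xlam hx₀ hxlam
end
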